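/- Let n ≥ 6 be an even integer, let k be an integer with 0 ≤ k ≤ 3, and let σ = (a b; 2^k d) ∈ SL₂(ℤ). Then x_n and y_n have neither zeros nor poles at the cusp a/2^k: there exist nonzero complex numbers ε₁ and ε₂ such that x_n(στ) → ε₁ and y_n(στ) → ε₂ as Im τ → ∞, where στ = (aτ+b)/(2^kτ+d). -/

import Mathlib

open Complex Filter Topology

/-- Jacobi theta function θ₂(τ) = ∑_{n∈ℤ} exp(πiτ(n+1/2)²). -/
noncomputable def θ₂ (τ : ℂ) : ℂ :=
  ∑' n : ℤ, Complex.exp (Real.pi * Complex.I * τ * ((n : ℂ) + 1/2)^2)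

/-- Jacobi theta function θ₃(τ) = ∑_{n∈ℤ} exp(πiτn²). -/
noncomputable def θ₃ (τ : ℂ) : ℂ :=
  ∑' n : ℤ, Complex.exp (Real.pi * Complex.I * τ * (n : ℂ)^2)

/-- x_n(τ) = 2θ₃(2^{n-1}τ)/θ₂(2^{n-1}τ). -/
noncomputable def xfun (n : ℕ) (τ : ℂ) : ℂ :=
  2 * θ₃ (2^(n-1) * τ) / θ₂ (2^(n-1) * τ)

/-- y_n(τ) = θ₂(8τ)/θ₂(2^{n-1}τ). -/
noncomputable def yfun (n : ℕ) (τ : ℂ) : ℂ :=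
  θ₂ (8 * τ) / θ₂ (2^(n-1) * τ)

/-! Put `u = (2^k τ + d) / 2^m`. Since `a d - 2^k b = 1`, one has `2^(k+m) · στ = -1/u + 2^m a`.
As `k ≤ 3` and `n ≥ 6`, both `2^(n-1)` and `8` are of the form `2^(k+m)` (with `m = n - 1 - k ≥ 2`,
resp. `m = 3 - k`), so `θ(2^(n-1) στ)` and `θ(8 στ)` are theta values at integer translates of
`-1/u`. An even translation leaves `θ₃` unchanged and any integer translation multiplies `θ₂` by an
eighth root of unity, while the inversion formulas `θ₃(-1/u) = √(-iu) θ₃(u)` and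
`θ₂(-1/u) = √(-iu) θ₄(u)`, with `θ₄(u) = θ₃(u + 1)`, produce square-root factors whose ratios are
constant. What remains is a quotient of `θ₃` and `θ₄` at points whose imaginary part tends to
infinity, where both tend to `1`.
-/

open scoped Real

lemma Complex.ofReal_mul_cpow {r : ℝ} (hr : 0 ≤ r) (w s : ℂ) :
    ((r : ℂ) * w) ^ s = (r : ℂ) ^ s * w ^ s := by
  rcases eq_or_ne s 0 with rfl | hs
  · simp
  rcases hr.eq_or_lt with rfl | hr
  · simp [zero_cpow hs]
  rcases eq_or_ne w 0 with rfl | hw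
  · simp [zero_cpow hs]
  have hr' : (r : ℂ) ≠ 0 := ofReal_ne_zero.mpr hr.ne'
  rw [cpow_def_of_ne_zero (mul_ne_zero hr' hw), cpow_def_of_ne_zero hr', cpow_def_of_ne_zero hw,
    log_ofReal_mul hr hw, ofReal_log hr.le, add_mul, Complex.exp_add]

lemma ne_zero_of_im_pos {τ : ℂ} (hτ : 0 < τ.im) : τ ≠ 0 :=
  ne_of_apply_ne im (by rw [zero_im]; exact hτ.ne')

lemma neg_I_mul_cpow_ne_zero {τ : ℂ} (hτ : τ ≠ 0) (s : ℂ) : (-I * τ) ^ s ≠ 0 := by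
  simp [cpow_eq_zero_iff, hτ]

lemma tendsto_comap_im_ofReal_mul {r : ℝ} (hr : 0 < r) :
    Tendsto (fun τ : ℂ ↦ (r : ℂ) * τ) (comap im atTop) (comap im atTop) := by
  refine tendsto_comap_iff.mpr ?_
  simpa only [Function.comp_def, im_ofReal_mul] using tendsto_comap.const_mul_atTop hr

lemma tendsto_comap_im_add_const (s : ℂ) :
    Tendsto (fun τ : ℂ ↦ τ + s) (comap im atTop) (comap im atTop) := by
  refine tendsto_comap_iff.mpr ?_
  simpa only [Function.comp_def, add_im] using tendsto_atTop_add_const_right _ s.im tendsto_comap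

lemma tendsto_jacobiTheta_atImInfty : Tendsto jacobiTheta (comap im atTop) (𝓝 1) := by
  have hexp : Tendsto (fun τ : ℂ ↦ Real.exp (-π * τ.im)) (comap im atTop) (𝓝 0) :=
    Real.tendsto_exp_atBot.comp <|
      tendsto_comap.const_mul_atTop_of_neg (neg_lt_zero.mpr Real.pi_pos)
  simpa using (isBigO_at_im_infty_jacobiTheta_sub_one.trans_tendsto hexp).add_const 1

lemma jacobiTheta_periodic : Function.Periodic jacobiTheta 2 := fun τ ↦ by
  rw [add_comm, jacobiTheta_two_add]

lemma jacobiTheta_neg_inv {τ : ℂ} (hτ : 0 < τ.im) :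
    jacobiTheta (-τ⁻¹) = (-I * τ) ^ (1 / 2 : ℂ) * jacobiTheta τ := by
  have h := jacobiTheta_S_smul ⟨τ, hτ⟩
  rw [UpperHalfPlane.modular_S_smul] at h
  simpa [inv_neg] using h

lemma jacobiTheta₂_one_half_eq_jacobiTheta_add_one (τ : ℂ) :
    jacobiTheta₂ (1 / 2) τ = jacobiTheta (τ + 1) := by
  rw [jacobiTheta_eq_jacobiTheta₂]
  refine tsum_congr fun n ↦ Complex.exp_eq_exp_iff_exists_int.mpr ?_
  obtain ⟨e, he⟩ := Int.even_mul_pred_self n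
  refine ⟨-e, ?_⟩
  have he' : (n : ℂ) * (n - 1) = e + e := by exact_mod_cast he
  push_cast
  linear_combination (-π * I) * he'

lemma θ₃_eq_jacobiTheta (τ : ℂ) : θ₃ τ = jacobiTheta τ :=
  tsum_congr fun n ↦ by ring_nf

lemma θ₂_eq_exp_mul_jacobiTheta₂ (τ : ℂ) :
    θ₂ τ = cexp (π * I * τ / 4) * jacobiTheta₂ (τ / 2) τ := by
  rw [θ₂, jacobiTheta₂, ← tsum_mul_left]
  refine tsum_congr fun n ↦ ?_
  rw [jacobiTheta₂_term, ← Complex.exp_add]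
  ring_nf

lemma θ₃_add_intCast_of_even (τ : ℂ) {m : ℤ} (hm : Even m) : θ₃ (τ + m) = θ₃ τ := by
  obtain ⟨e, rfl⟩ := hm
  simpa [θ₃_eq_jacobiTheta, ← two_mul, mul_comm] using jacobiTheta_periodic.int_mul e τ

lemma θ₂_add_intCast (τ : ℂ) (m : ℤ) : θ₂ (τ + m) = cexp (π * I * m / 4) * θ₂ τ := by
  rw [θ₂, θ₂, ← tsum_mul_left]
  refine tsum_congr fun n ↦ ?_
  rw [← Complex.exp_add]
  refine Complex.exp_eq_exp_iff_exists_int.mpr ?_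
  obtain ⟨e, he⟩ := Int.even_mul_succ_self n
  refine ⟨m * e, ?_⟩
  have he' : (n : ℂ) * (n + 1) = e + e := by exact_mod_cast he
  push_cast
  linear_combination (π * I * m) * he'

lemma θ₃_neg_inv {τ : ℂ} (hτ : 0 < τ.im) :
    θ₃ (-τ⁻¹) = (-I * τ) ^ (1 / 2 : ℂ) * jacobiTheta τ := by
  rw [θ₃_eq_jacobiTheta, jacobiTheta_neg_inv hτ]

lemma θ₂_neg_inv {τ : ℂ} (hτ : 0 < τ.im) :
    θ₂ (-τ⁻¹) = (-I * τ) ^ (1 / 2 : ℂ) * jacobiTheta (τ + 1) := by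
  rw [← jacobiTheta₂_one_half_eq_jacobiTheta_add_one, jacobiTheta₂_functional_equation,
    θ₂_eq_exp_mul_jacobiTheta₂, neg_div, jacobiTheta₂_neg_left, ← mul_assoc, ← mul_assoc,
    mul_one_div_cancel (neg_I_mul_cpow_ne_zero (ne_zero_of_im_pos hτ) _), one_mul]
  congr 2 <;> ring

lemma θ₃_div_θ₂_neg_inv_add_intCast {τ : ℂ} (hτ : 0 < τ.im) {m : ℤ} (hm : Even m) :
    θ₃ (-τ⁻¹ + m) / θ₂ (-τ⁻¹ + m) =
      (cexp (π * I * m / 4))⁻¹ * (jacobiTheta τ / jacobiTheta (τ + 1)) := by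
  have hsqrt := neg_I_mul_cpow_ne_zero (ne_zero_of_im_pos hτ) (1 / 2)
  rw [θ₃_add_intCast_of_even _ hm, θ₂_add_intCast, θ₃_neg_inv hτ, θ₂_neg_inv hτ]
  generalize (-I * τ) ^ (1 / 2 : ℂ) = s at hsqrt ⊢
  field_simp

lemma θ₂_div_θ₂_neg_inv_add_intCast {τ : ℂ} (hτ : 0 < τ.im) {r : ℝ} (hr : 0 < r) (m m' : ℤ) :
    θ₂ (-((r : ℂ) * τ)⁻¹ + m') / θ₂ (-τ⁻¹ + m) =
      cexp (π * I * m' / 4) * (cexp (π * I * m / 4))⁻¹ * (r : ℂ) ^ (1 / 2 : ℂ) *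
        (jacobiTheta (r * τ + 1) / jacobiTheta (τ + 1)) := by
  have hsqrt := neg_I_mul_cpow_ne_zero (ne_zero_of_im_pos hτ) (1 / 2)
  have hrτ : 0 < ((r : ℂ) * τ).im := by simpa using mul_pos hr hτ
  rw [θ₂_add_intCast, θ₂_add_intCast, θ₂_neg_inv hτ, θ₂_neg_inv hrτ, mul_left_comm (-I),
    ofReal_mul_cpow hr.le]
  generalize (-I * τ) ^ (1 / 2 : ℂ) = s at hsqrt ⊢
  field_simp

lemma two_pow_mul_moebius_eq {k m : ℕ} {a b d : ℤ} (hdet : a * d - 2 ^ k * b = 1) {τ u : ℂ}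
    (hu : u ≠ 0) (hτ : 2 ^ k * τ + d = 2 ^ m * u) :
    (2 : ℂ) ^ (k + m) * ((a * τ + b) / (2 ^ k * τ + d)) = -u⁻¹ + ((2 ^ m * a : ℤ) : ℂ) := by
  have hdetC : (a * d - 2 ^ k * b : ℂ) = 1 := by exact_mod_cast hdet
  rw [hτ, pow_add]
  field_simp
  push_cast
  linear_combination (-1 : ℂ) * hdetC + a * hτ

lemma xfun_moebius_eq {n k m : ℕ} (hn : n - 1 = k + m) (hm : m ≠ 0) {a b d : ℤ}
    (hdet : a * d - 2 ^ k * b = 1) {τ u : ℂ} (hu : 0 < u.im) (hτ : 2 ^ k * τ + d = 2 ^ m * u) :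
    xfun n ((a * τ + b) / (2 ^ k * τ + d)) =
      2 * (cexp (π * I * ((2 ^ m * a : ℤ) : ℂ) / 4))⁻¹ *
        (jacobiTheta u / jacobiTheta (u + 1)) := by
  have hu0 := ne_zero_of_im_pos hu
  have heven : Even (2 ^ m * a) := (Int.even_pow.mpr ⟨even_two, hm⟩).mul_right a
  rw [xfun, mul_div_assoc, hn, two_pow_mul_moebius_eq hdet hu0 hτ,
    θ₃_div_θ₂_neg_inv_add_intCast hu heven, ← mul_assoc]

lemma yfun_moebius_eq {n k j p : ℕ} (hk : k + j = 3) (hn : n - 1 = k + (j + p)) {a b d : ℤ}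
    (hdet : a * d - 2 ^ k * b = 1) {τ u : ℂ} (hu : 0 < u.im)
    (hτ : 2 ^ k * τ + d = 2 ^ (j + p) * u) :
    yfun n ((a * τ + b) / (2 ^ k * τ + d)) =
      cexp (π * I * ((2 ^ j * a : ℤ) : ℂ) / 4) *
        (cexp (π * I * ((2 ^ (j + p) * a : ℤ) : ℂ) / 4))⁻¹ * ((2 ^ p : ℝ) : ℂ) ^ (1 / 2 : ℂ) *
        (jacobiTheta ((2 ^ p : ℝ) * u + 1) / jacobiTheta (u + 1)) := by
  have hu0 := ne_zero_of_im_pos hu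
  have hτ' : (2 : ℂ) ^ k * τ + d = 2 ^ j * (((2 ^ p : ℝ) : ℂ) * u) := by
    rw [hτ]
    push_cast
    ring
  rw [yfun, show (8 : ℂ) = 2 ^ (k + j) by rw [hk]; norm_num, hn,
    two_pow_mul_moebius_eq hdet hu0 hτ,
    two_pow_mul_moebius_eq hdet (mul_ne_zero (by norm_num) hu0) hτ',
    θ₂_div_θ₂_neg_inv_add_intCast hu (by positivity)]

theorem behavior_at_low_cusps_general (n : ℕ) (hn : 6 ≤ n)
    (k : ℕ) (hk : k ≤ 3)
    (a b d : ℤ) (hdet : a * d - 2 ^ k * b = 1) :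
    ∃ ε₁ ε₂ : ℂ, ε₁ ≠ 0 ∧ ε₂ ≠ 0 ∧
      Tendsto (fun τ : ℂ =>
          xfun n (((a : ℂ) * τ + b) / ((2 ^ k : ℂ) * τ + d)))
        (comap Complex.im atTop) (𝓝 ε₁) ∧
      Tendsto (fun τ : ℂ =>
          yfun n (((a : ℂ) * τ + b) / ((2 ^ k : ℂ) * τ + d)))
        (comap Complex.im atTop) (𝓝 ε₂) := by
  obtain ⟨j, hkj⟩ : ∃ j, k + j = 3 := ⟨3 - k, by omega⟩
  obtain ⟨p, hp⟩ : ∃ p, n - 1 = k + (j + p) := ⟨n - 4, by omega⟩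
  set u : ℂ → ℂ := fun τ ↦ ((2 ^ k / 2 ^ (j + p) : ℝ) : ℂ) * τ + d / 2 ^ (j + p)
  have hu : Tendsto u (comap im atTop) (comap im atTop) :=
    (tendsto_comap_im_add_const _).comp (tendsto_comap_im_ofReal_mul (by positivity))
  have hτ (τ : ℂ) : (2 : ℂ) ^ k * τ + d = 2 ^ (j + p) * u τ := by
    simp only [u]
    push_cast
    field_simp
  have him : ∀ᶠ τ in comap im atTop, 0 < (u τ).im :=
    hu.eventually (preimage_mem_comap (Ioi_mem_atTop 0))
  have hθ₃ := tendsto_jacobiTheta_atImInfty.comp hu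
  have hθ₄ := tendsto_jacobiTheta_atImInfty.comp ((tendsto_comap_im_add_const 1).comp hu)
  have hθ₄' := tendsto_jacobiTheta_atImInfty.comp ((tendsto_comap_im_add_const 1).comp
    ((tendsto_comap_im_ofReal_mul (r := 2 ^ p) (by positivity)).comp hu))
  refine ⟨_, _, ?_, ?_,
    (tendsto_const_nhds.mul (hθ₃.div hθ₄ one_ne_zero)).congr'
      (him.mono fun τ hτu ↦ (xfun_moebius_eq hp (by omega) hdet hτu (hτ τ)).symm),
    (tendsto_const_nhds.mul (hθ₄'.div hθ₄ one_ne_zero)).congr'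
      (him.mono fun τ hτu ↦ (yfun_moebius_eq hkj hp hdet hτu (hτ τ)).symm)⟩
  · simp
  · simp [Complex.exp_ne_zero]

theorem behavior_at_low_cusps (n : ℕ) (hn : 6 ≤ n) (hn2 : Even n)
    (k : ℕ) (hk : k ≤ 3)
    (a b d : ℤ) (hdet : a * d - 2 ^ k * b = 1) :
    ∃ ε₁ ε₂ : ℂ, ε₁ ≠ 0 ∧ ε₂ ≠ 0 ∧
      Tendsto (fun τ : ℂ =>
          xfun n (((a : ℂ) * τ + b) / ((2 ^ k : ℂ) * τ + d)))
        (comap Complex.im atTop) (𝓝 ε₁) ∧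
      Tendsto (fun τ : ℂ =>
          yfun n (((a : ℂ) * τ + b) / ((2 ^ k : ℂ) * τ + d)))
        (comap Complex.im atTop) (𝓝 ε₂) :=
  behavior_at_low_cusps_general n hn k hk a b d hdet
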